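/- Let Φ be a reduced root system and M a ℤ-module. Every symmetric 2-cocycle on Φ with values in M is exact: for every symmetric 2-cocycle ω there exists a 1-cochain ω¹: Φ₀ → M with ω¹(0) = 0 such that ω(α|β) = ω¹(α) + ω¹(β) − ω¹(α+β) for all α,β ∈ Φ₀ with α+β ∈ Φ₀. In other words, the second symmetric cohomology group H²₊(Φ,M) is trivial. -/

import Mathlib

/-!
Pick a linear functional `f` vanishing on no root; it splits `Φ` into the positive roots `P` and
`-P`. On `P`, define `ω1` by induction along `f`: a positive root `x = a + b` gets
`ω1 x = ω1 a + ω1 b - ω(a|b)`. This does not depend on the decomposition: for `a + b = c + d` the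
inner product of `a + b` with itself is positive, so some root on the left has positive inner
product with some root on the right, whence `a - c` or `a - d` lies in `Φ₀`, and the cocycle
identity for the triple through that difference identifies the two values. After subtracting this
coboundary, `ω` vanishes on pairs of positive roots, and `ω1 (-x) = ω(x|-x)` for `x ∈ P`
accounts for the remaining pairs, again by the cocycle identity and symmetry.
-/

open scoped RealInnerProductSpace

/-- A reduced root system `Φ` in a real inner product space `V`:
a finite set of nonzero vectors spanning `V`, closed under the reflections it determines,
with integral Cartan numbers, such that the only multiples of a root in `Φ` are `±α`. -/
structure ReducedRootSystem (V : Type) [NormedAddCommGroup V] [InnerProductSpace ℝ V] :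
    Type where
  roots : Set V
  finite : roots.Finite
  nonzero : ∀ α ∈ roots, α ≠ 0
  spans : Submodule.span ℝ roots = ⊤
  reflect_mem : ∀ α ∈ roots, ∀ β ∈ roots, β - (2 * ⟪β, α⟫ / ⟪α, α⟫) • α ∈ roots
  integral : ∀ α ∈ roots, ∀ β ∈ roots, ∃ n : ℤ, 2 * ⟪β, α⟫ / ⟪α, α⟫ = (n : ℝ)
  reduced : ∀ α ∈ roots, ∀ t : ℝ, t • α ∈ roots → t = 1 ∨ t = -1

variable {V : Type} [NormedAddCommGroup V] [InnerProductSpace ℝ V]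

/-- `Φ₀ = Φ ∪ {0}`. -/
def rootsZero (Φ : ReducedRootSystem V) : Set V := insert 0 Φ.roots

section Cochain

variable {G M : Type*} [AddCommGroup G] [AddCommGroup M]

def coboundary (g : G → M) (a b : G) : M := g a + g b - g (a + b)

def IsCocycleOn (S : Set G) (ω : G → G → M) : Prop :=
  ∀ α ∈ S, ∀ β ∈ S, ∀ γ ∈ S, α + β ∈ S → β + γ ∈ S → α + β + γ ∈ S →
    ω β γ - ω (α + β) γ + ω α (β + γ) - ω α β = 0

def IsSymmOn (S : Set G) (ω : G → G → M) : Prop :=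
  ∀ α ∈ S, ∀ β ∈ S, α + β ∈ S → ω β α = ω α β

lemma coboundary_add (g k : G → M) : coboundary (g + k) = coboundary g + coboundary k := by
  ext a b
  simp only [coboundary, Pi.add_apply]
  abel

lemma coboundary_comm (g : G → M) (a b : G) : coboundary g b a = coboundary g a b := by
  simp only [coboundary, add_comm]

lemma coboundary_single_of_ne [DecidableEq G] {x a b : G} (c : M) (ha : a ≠ x) (hb : b ≠ x) :
    coboundary (Pi.single x c : G → M) a b = -(Pi.single x c : G → M) (a + b) := by
  simp [coboundary, Pi.single_apply, ha, hb]

variable {S : Set G} {f : G →+ ℝ} {ω : G → G → M}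

lemma IsCocycleOn.add_eq_add (h : IsCocycleOn S ω) {a b c x y z : G} (ha : a ∈ S) (hb : b ∈ S)
    (hc : c ∈ S) (hx : x ∈ S) (hy : y ∈ S) (hz : z ∈ S) (hab : a + b = x) (hbc : b + c = y)
    (hxc : x + c = z) : ω a b + ω x c = ω b c + ω a y := by
  subst hab hbc hxc
  have := h a ha b hb c hc hx hy hz
  rw [← sub_eq_zero, ← neg_eq_zero, ← this]
  abel

lemma IsCocycleOn.sub_coboundary (h : IsCocycleOn S ω) (g : G → M) :
    IsCocycleOn S (ω - coboundary g) := by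
  intro α hα β hβ γ hγ hαβ hβγ hαβγ
  have := h α hα β hβ γ hγ hαβ hβγ hαβγ
  simp only [Pi.sub_apply, coboundary, add_assoc] at this ⊢
  rw [← sub_eq_zero.1 this]
  abel

lemma IsSymmOn.sub_coboundary (h : IsSymmOn S ω) (g : G → M) :
    IsSymmOn S (ω - coboundary g) := by
  intro α hα β hβ hαβ
  simp only [Pi.sub_apply, coboundary_comm, h α hα β hβ hαβ]

def positivePart (S : Set G) (f : G →+ ℝ) : Set G := {x ∈ S | 0 < f x}

lemma ne_zero_of_mem_positivePart {x : G} (hx : x ∈ positivePart S f) : x ≠ 0 :=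
  fun h => (h ▸ hx.2).ne' (map_zero f)

lemma add_ne_zero_of_mem_positivePart {a b : G} (ha : a ∈ positivePart S f)
    (hb : b ∈ positivePart S f) : a + b ≠ 0 :=
  fun h => (add_pos ha.2 hb.2).ne' (by rw [← map_add, h, map_zero])

lemma add_mem_positivePart {a b : G} (ha : a ∈ positivePart S f) (hb : b ∈ positivePart S f)
    (hab : a + b ∈ S) : a + b ∈ positivePart S f :=
  ⟨hab, by rw [map_add]; exact add_pos ha.2 hb.2⟩

lemma eq_zero_or_mem_positivePart_or_neg (hSneg : ∀ x ∈ S, -x ∈ S)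
    (hf : ∀ x ∈ S, f x = 0 → x = 0) {x : G} (hx : x ∈ S) :
    x = 0 ∨ x ∈ positivePart S f ∨ ∃ y ∈ positivePart S f, -y = x := by
  rcases lt_trichotomy (f x) 0 with h | h | h
  · exact .inr (.inr ⟨-x, ⟨hSneg x hx, by rw [map_neg]; linarith⟩, neg_neg x⟩)
  · exact .inl (hf x hx h)
  · exact .inr (.inl ⟨hx, h⟩)

lemma apply_add_neg_of_vanishing (hS0 : (0 : G) ∈ S) (hSneg : ∀ x ∈ S, -x ∈ S)
    (hz' : ∀ a ∈ S, ω a 0 = 0) (hcoc : IsCocycleOn S ω)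
    (hvan : ∀ a ∈ positivePart S f, ∀ b ∈ positivePart S f, a + b ∈ S → ω a b = 0)
    {a b : G} (ha : a ∈ positivePart S f) (hb : b ∈ positivePart S f) (hab : a + b ∈ S) :
    ω (a + b) (-a) = ω a (-a) := by
  have := hcoc.add_eq_add hb.1 ha.1 (hSneg a ha.1) hab hS0 hb.1 (add_comm b a)
    (add_neg_cancel a) (add_neg_cancel_comm a b)
  rwa [hvan b hb a ha (by rwa [add_comm]), hz' b hb.1, zero_add, add_zero] at this

lemma apply_neg_add_of_vanishing (hS0 : (0 : G) ∈ S) (hSneg : ∀ x ∈ S, -x ∈ S)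
    (hz : ∀ a ∈ S, ω 0 a = 0) (hz' : ∀ a ∈ S, ω a 0 = 0) (hcoc : IsCocycleOn S ω)
    (hsym : IsSymmOn S ω)
    (hvan : ∀ a ∈ positivePart S f, ∀ b ∈ positivePart S f, a + b ∈ S → ω a b = 0)
    {a c : G} (ha : a ∈ positivePart S f) (hc : c ∈ positivePart S f) (hac : a + c ∈ S) :
    ω a (-(a + c)) = ω (a + c) (-(a + c)) - ω c (-c) := by
  have hca : c + a ∈ S := by rwa [add_comm]
  have h1 := hcoc.add_eq_add (hSneg c hc.1) hc.1 ha.1 hS0 hca ha.1 (neg_add_cancel c) rfl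
    (zero_add a)
  have h2 := hcoc.add_eq_add ha.1 (hSneg _ hac) hac (hSneg c hc.1) hS0 ha.1 (by abel)
    (neg_add_cancel _) (by abel)
  rw [hz a ha.1, hvan c hc a ha hca, add_zero, zero_add, add_comm c a,
    hsym c hc.1 (-c) (hSneg c hc.1) (by rwa [add_neg_cancel])] at h1
  rw [hz' a ha.1, add_zero, hsym _ hac _ (hSneg _ hac) (by rwa [add_neg_cancel]), ← h1] at h2
  exact eq_sub_of_add_eq h2

lemma apply_neg_neg_of_vanishing (hS0 : (0 : G) ∈ S) (hSneg : ∀ x ∈ S, -x ∈ S)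
    (hz : ∀ a ∈ S, ω 0 a = 0) (hz' : ∀ a ∈ S, ω a 0 = 0) (hcoc : IsCocycleOn S ω)
    (hsym : IsSymmOn S ω)
    (hvan : ∀ a ∈ positivePart S f, ∀ b ∈ positivePart S f, a + b ∈ S → ω a b = 0)
    {a b : G} (ha : a ∈ positivePart S f) (hb : b ∈ positivePart S f) (hab : a + b ∈ S) :
    ω (-a) (-b) = ω a (-a) + ω b (-b) - ω (a + b) (-(a + b)) := by
  have h1 := hcoc.add_eq_add (hSneg a ha.1) (hSneg b hb.1) hb.1 (hSneg _ hab) hS0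
    (hSneg a ha.1) (neg_add _ _).symm (neg_add_cancel b) (by abel)
  have h2 := hcoc.add_eq_add (hSneg _ hab) hab (hSneg a ha.1) hS0 hb.1 (hSneg a ha.1)
    (neg_add_cancel _) (by abel) (zero_add _)
  rw [hz' _ (hSneg a ha.1), add_zero,
    hsym b hb.1 (-b) (hSneg b hb.1) (by rwa [add_neg_cancel])] at h1
  rw [hz _ (hSneg a ha.1), add_zero, apply_add_neg_of_vanishing hS0 hSneg hz' hcoc hvan ha hb hab,
    hsym _ hab _ (hSneg _ hab) (by rwa [add_neg_cancel])] at h2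
  rw [eq_sub_iff_add_eq, ← h1, h2]
  abel

/-- For positive `x`, a 1-cochain `h` vanishing on the positive part must satisfy
`h (-x) = ω x (-x)`, since `ω x (-x) = h x + h (-x) - h 0`. -/
noncomputable def negCochain (f : G →+ ℝ) (ω : G → G → M) (x : G) : M :=
  if 0 < f (-x) then ω (-x) x else 0

lemma negCochain_of_pos {x : G} (hx : 0 < f x) : negCochain f ω x = 0 :=
  if_neg (by rw [map_neg]; linarith)

lemma negCochain_neg {x : G} (hx : 0 < f x) : negCochain f ω (-x) = ω x (-x) := by
  rw [negCochain, neg_neg, if_pos hx]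

lemma negCochain_zero : negCochain f ω 0 = 0 :=
  if_neg (by simp)

lemma apply_neg_eq_coboundary_negCochain (hS0 : (0 : G) ∈ S) (hSneg : ∀ x ∈ S, -x ∈ S)
    (hf : ∀ x ∈ S, f x = 0 → x = 0) (hz : ∀ a ∈ S, ω 0 a = 0) (hz' : ∀ a ∈ S, ω a 0 = 0)
    (hcoc : IsCocycleOn S ω) (hsym : IsSymmOn S ω)
    (hvan : ∀ a ∈ positivePart S f, ∀ b ∈ positivePart S f, a + b ∈ S → ω a b = 0)
    {a b : G} (ha : a ∈ positivePart S f) (hb : b ∈ positivePart S f) (hab : a + -b ∈ S) :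
    ω a (-b) = coboundary (negCochain f ω) a (-b) := by
  rcases eq_zero_or_mem_positivePart_or_neg hSneg hf hab with h | hpos | ⟨c, hc, hcab⟩
  · obtain rfl : a = b := add_neg_eq_zero.1 h
    rw [coboundary, h, negCochain_of_pos ha.2, negCochain_neg ha.2, negCochain_zero]
    abel
  · obtain ⟨c, hc, rfl⟩ : ∃ c ∈ positivePart S f, b + c = a := ⟨_, hpos, by abel⟩
    rw [apply_add_neg_of_vanishing hS0 hSneg hz' hcoc hvan hb hc ha.1, coboundary,
      add_neg_cancel_comm, negCochain_of_pos ha.2, negCochain_neg hb.2, negCochain_of_pos hc.2]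
    abel
  · obtain rfl : b = a + c := by
      calc b = a - (a + -b) := by abel
        _ = a + c := by rw [← hcab]; abel
    rw [apply_neg_add_of_vanishing hS0 hSneg hz hz' hcoc hsym hvan ha hc hb.1, coboundary,
      show a + -(a + c) = -c by abel, negCochain_of_pos ha.2, negCochain_neg hb.2,
      negCochain_neg hc.2]
    abel

lemma eq_coboundary_negCochain_of_vanishing (hS0 : (0 : G) ∈ S) (hSneg : ∀ x ∈ S, -x ∈ S)
    (hf : ∀ x ∈ S, f x = 0 → x = 0) (hz : ∀ a ∈ S, ω 0 a = 0) (hz' : ∀ a ∈ S, ω a 0 = 0)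
    (hcoc : IsCocycleOn S ω) (hsym : IsSymmOn S ω)
    (hvan : ∀ a ∈ positivePart S f, ∀ b ∈ positivePart S f, a + b ∈ S → ω a b = 0)
    {a b : G} (ha : a ∈ S) (hb : b ∈ S) (hab : a + b ∈ S) :
    ω a b = coboundary (negCochain f ω) a b := by
  rcases eq_zero_or_mem_positivePart_or_neg hSneg hf ha with rfl | hpa | ⟨a, hpa, rfl⟩
  · rw [hz b hb, coboundary, negCochain_zero, zero_add, zero_add, sub_self]
  all_goals rcases eq_zero_or_mem_positivePart_or_neg hSneg hf hb with rfl | hpb | ⟨b, hpb, rfl⟩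
  · rw [hz' _ ha, coboundary, negCochain_zero, add_zero, add_zero, sub_self]
  · rw [hvan a hpa b hpb hab, coboundary, negCochain_of_pos hpa.2, negCochain_of_pos hpb.2,
      negCochain_of_pos (add_mem_positivePart hpa hpb hab).2]
    abel
  · exact apply_neg_eq_coboundary_negCochain hS0 hSneg hf hz hz' hcoc hsym hvan hpa hpb hab
  · rw [hz' _ ha, coboundary, negCochain_zero, add_zero, add_zero, sub_self]
  · rw [← hsym _ ha _ hb hab, coboundary_comm]
    exact apply_neg_eq_coboundary_negCochain hS0 hSneg hf hz hz' hcoc hsym hvan hpb hpa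
      (by rwa [add_comm])
  · have hab' : a + b ∈ S := by simpa only [neg_add, neg_neg] using hSneg _ hab
    rw [apply_neg_neg_of_vanishing hS0 hSneg hz hz' hcoc hsym hvan hpa hpb hab', coboundary,
      ← neg_add, negCochain_neg hpa.2, negCochain_neg hpb.2,
      negCochain_neg (add_mem_positivePart hpa hpb hab').2]

lemma add_apply_eq_apply_add_of_vanishing (hcoc : IsCocycleOn S ω) {x : G} (hx : x ∈ S)
    (hvan : ∀ a ∈ positivePart S f, ∀ b ∈ positivePart S f, a + b ∈ S → f (a + b) < f x →
      ω a b = 0)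
    {c e b : G} (hc : c ∈ positivePart S f) (he : e ∈ positivePart S f)
    (hb : b ∈ positivePart S f) (hce : c + e ∈ S) (heb : e + b ∈ S) (hceb : c + e + b = x) :
    ω (c + e) b = ω c (e + b) := by
  subst hceb
  have := hcoc.add_eq_add hc.1 he.1 hb.1 hce heb hx rfl rfl rfl
  rwa [hvan c hc e he hce (by simp only [map_add]; linarith [hb.2]),
    hvan e he b hb heb (by simp only [map_add]; linarith [hc.2]), zero_add, zero_add] at this

lemma apply_eq_of_add_eq_of_vanishing (hSneg : ∀ x ∈ S, -x ∈ S)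
    (hf : ∀ x ∈ S, f x = 0 → x = 0) (hcoc : IsCocycleOn S ω) (hsym : IsSymmOn S ω)
    (hexch : ∀ a ∈ positivePart S f, ∀ b ∈ positivePart S f, ∀ c ∈ positivePart S f,
      ∀ d ∈ positivePart S f, a + b = c + d → a - c ∈ S ∨ a - d ∈ S)
    {x : G} (hx : x ∈ S)
    (hvan : ∀ a ∈ positivePart S f, ∀ b ∈ positivePart S f, a + b ∈ S → f (a + b) < f x →
      ω a b = 0)
    {a b c d : G} (ha : a ∈ positivePart S f) (hb : b ∈ positivePart S f)
    (hc : c ∈ positivePart S f) (hd : d ∈ positivePart S f) (hab : a + b = x) (hcd : c + d = x) :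
    ω a b = ω c d := by
  have key : ∀ c ∈ positivePart S f, ∀ d ∈ positivePart S f, c + d = x → a - c ∈ S →
      ω a b = ω c d := by
    intro c hc d hd hcd hac
    rcases eq_zero_or_mem_positivePart_or_neg hSneg hf hac with h | hpos | ⟨e, he, hea⟩
    · obtain rfl : a = c := sub_eq_zero.1 h
      obtain rfl : b = d := add_left_cancel (hab.trans hcd.symm)
      rfl
    · obtain ⟨e, he, rfl⟩ : ∃ e ∈ positivePart S f, c + e = a := ⟨_, hpos, by abel⟩
      obtain rfl : d = e + b := add_left_cancel (by rw [hcd, ← hab, add_assoc])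
      exact add_apply_eq_apply_add_of_vanishing hcoc hx hvan hc he hb ha.1 hd.1 hab
    · obtain rfl : c = a + e := by
        calc c = a - (a - c) := by abel
          _ = a + e := by rw [← hea, sub_neg_eq_add]
      obtain rfl : b = e + d := add_left_cancel (by rw [hab, ← hcd, add_assoc])
      exact (add_apply_eq_apply_add_of_vanishing hcoc hx hvan ha he hd hc.1 hb.1 hcd).symm
  rcases hexch a ha b hb c hc d hd (hab.trans hcd.symm) with h | h
  · exact key c hc d hd hcd h
  · rw [key d hd c hc (by rwa [add_comm]) h, hsym c hc.1 d hd.1 (hcd ▸ hx)]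

lemma exists_coboundary_insert [DecidableEq G] (hSneg : ∀ x ∈ S, -x ∈ S)
    (hf : ∀ x ∈ S, f x = 0 → x = 0) (hcoc : IsCocycleOn S ω) (hsym : IsSymmOn S ω)
    (hexch : ∀ a ∈ positivePart S f, ∀ b ∈ positivePart S f, ∀ c ∈ positivePart S f,
      ∀ d ∈ positivePart S f, a + b = c + d → a - c ∈ S ∨ a - d ∈ S)
    {s : Finset G} {x : G} (hx : x ∈ S) (hxs : x ∉ s)
    (hmax : ∀ z ∈ s, f z ≤ f x) (hbelow : ∀ y ∈ positivePart S f, f y < f x → y ∈ s)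
    {g : G → M} (hg : ∀ a ∈ positivePart S f, ∀ b ∈ positivePart S f, a + b ∈ s →
      ω a b = coboundary g a b) :
    ∃ g' : G → M, ∀ a ∈ positivePart S f, ∀ b ∈ positivePart S f, a + b ∈ insert x s →
      ω a b = coboundary g' a b := by
  by_cases hdec : ∃ a₀ ∈ positivePart S f, ∃ b₀ ∈ positivePart S f, a₀ + b₀ = x
  swap
  · refine ⟨g, fun a ha b hb hab => hg a ha b hb ?_⟩
    exact (Finset.mem_insert.1 hab).resolve_left fun h => hdec ⟨a, ha, b, hb, h⟩
  obtain ⟨a₀, ha₀, b₀, hb₀, hx₀⟩ := hdec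
  have hvan : ∀ a ∈ positivePart S f, ∀ b ∈ positivePart S f, a + b ∈ S → f (a + b) < f x →
      (ω - coboundary g) a b = 0 := fun a ha b hb hab hlt =>
    sub_eq_zero.2 (hg a ha b hb (hbelow _ (add_mem_positivePart ha hb hab) hlt))
  refine ⟨g + Pi.single x (-(ω - coboundary g) a₀ b₀), fun a ha b hb hab => ?_⟩
  have hle : f (a + b) ≤ f x := by
    rcases Finset.mem_insert.1 hab with h | h
    exacts [h ▸ le_rfl, hmax _ h]
  have hax : a ≠ x := fun h => by rw [map_add, h] at hle; linarith [hb.2]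
  have hbx : b ≠ x := fun h => by rw [map_add, h] at hle; linarith [ha.2]
  rw [coboundary_add, Pi.add_apply, Pi.add_apply, coboundary_single_of_ne _ hax hbx]
  rcases Finset.mem_insert.1 hab with h | h
  · rw [h, Pi.single_eq_same, neg_neg, ← apply_eq_of_add_eq_of_vanishing hSneg hf
      (hcoc.sub_coboundary g) (hsym.sub_coboundary g) hexch hx hvan ha hb ha₀ hb₀ h hx₀,
      Pi.sub_apply, Pi.sub_apply, add_sub_cancel]
  · rw [Pi.single_eq_of_ne (ne_of_mem_of_not_mem h hxs), neg_zero, add_zero, hg a ha b hb h]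

lemma exists_coboundary_on_positivePart (hfin : S.Finite) (hSneg : ∀ x ∈ S, -x ∈ S)
    (hf : ∀ x ∈ S, f x = 0 → x = 0) (hcoc : IsCocycleOn S ω) (hsym : IsSymmOn S ω)
    (hexch : ∀ a ∈ positivePart S f, ∀ b ∈ positivePart S f, ∀ c ∈ positivePart S f,
      ∀ d ∈ positivePart S f, a + b = c + d → a - c ∈ S ∨ a - d ∈ S) :
    ∃ g : G → M, g 0 = 0 ∧ ∀ a ∈ positivePart S f, ∀ b ∈ positivePart S f, a + b ∈ S →
      ω a b = coboundary g a b := by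
  classical
  have key : ∀ s : Finset G, ↑s ⊆ S →
      (∀ y ∈ positivePart S f, ∀ z ∈ s, f y < f z → y ∈ s) → ∃ g : G → M,
        ∀ a ∈ positivePart S f, ∀ b ∈ positivePart S f, a + b ∈ s → ω a b = coboundary g a b := by
    intro s
    induction s using Finset.induction_on_max_value f with
    | empty => exact fun _ _ => ⟨0, by simp⟩
    | insert x s hxs hmax ih =>
      intro hsS hdc
      rw [Finset.coe_insert, Set.insert_subset_iff] at hsS
      have hdc' : ∀ y ∈ positivePart S f, ∀ z ∈ insert x s, f y < f z → f y < f x → y ∈ s :=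
        fun y hy z hz hlt hltx => (Finset.mem_insert.1 (hdc y hy z hz hlt)).resolve_left
          fun h => hltx.ne (congrArg f h)
      obtain ⟨g, hg⟩ := ih hsS.2 fun y hy z hz hlt =>
        hdc' y hy z (Finset.mem_insert_of_mem hz) hlt (hlt.trans_le (hmax z hz))
      exact exists_coboundary_insert hSneg hf hcoc hsym hexch hsS.1 hxs hmax
        (fun y hy hlt => hdc' y hy x (Finset.mem_insert_self x s) hlt hlt) hg
  have hPfin : (positivePart S f).Finite := hfin.subset (Set.sep_subset _ _)
  obtain ⟨g, hg⟩ := key hPfin.toFinset (by rw [Set.Finite.coe_toFinset]; exact Set.sep_subset _ _)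
    fun y hy _ _ _ => hPfin.mem_toFinset.2 hy
  refine ⟨(positivePart S f).indicator g,
    Set.indicator_of_notMem (fun h => ne_zero_of_mem_positivePart h rfl) g,
    fun a ha b hb hab => ?_⟩
  have hab' := add_mem_positivePart ha hb hab
  rw [hg a ha b hb (hPfin.mem_toFinset.2 hab'), coboundary, coboundary,
    Set.indicator_of_mem ha, Set.indicator_of_mem hb, Set.indicator_of_mem hab']

theorem exists_coboundary_of_isCocycleOn_of_isSymmOn (hfin : S.Finite) (hS0 : (0 : G) ∈ S)
    (hSneg : ∀ x ∈ S, -x ∈ S) (hf : ∀ x ∈ S, f x = 0 → x = 0)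
    (hz : ∀ a ∈ S, ω 0 a = 0) (hz' : ∀ a ∈ S, ω a 0 = 0) (hcoc : IsCocycleOn S ω)
    (hsym : IsSymmOn S ω)
    (hexch : ∀ a ∈ positivePart S f, ∀ b ∈ positivePart S f, ∀ c ∈ positivePart S f,
      ∀ d ∈ positivePart S f, a + b = c + d → a - c ∈ S ∨ a - d ∈ S) :
    ∃ ω1 : G → M, ω1 0 = 0 ∧ ∀ a ∈ S, ∀ b ∈ S, a + b ∈ S → ω a b = coboundary ω1 a b := by
  obtain ⟨g, hg0, hg⟩ := exists_coboundary_on_positivePart hfin hSneg hf hcoc hsym hexch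
  have hvan : ∀ a ∈ positivePart S f, ∀ b ∈ positivePart S f, a + b ∈ S →
      (ω - coboundary g) a b = 0 := fun a ha b hb hab => sub_eq_zero.2 (hg a ha b hb hab)
  have hz₁ : ∀ a ∈ S, (ω - coboundary g) 0 a = 0 := fun a ha => by
    simp [coboundary, hz a ha, hg0]
  have hz₁' : ∀ a ∈ S, (ω - coboundary g) a 0 = 0 := fun a ha => by
    simp [coboundary, hz' a ha, hg0]
  refine ⟨negCochain f (ω - coboundary g) + g,
    by rw [Pi.add_apply, negCochain_zero, hg0, add_zero], fun a ha b hb hab => ?_⟩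
  rw [coboundary_add, Pi.add_apply, Pi.add_apply, ← eq_coboundary_negCochain_of_vanishing hS0
    hSneg hf hz₁ hz₁' (hcoc.sub_coboundary g) (hsym.sub_coboundary g) hvan ha hb hab,
    Pi.sub_apply, Pi.sub_apply, sub_add_cancel]

end Cochain

namespace ReducedRootSystem

variable (Φ : ReducedRootSystem V)

lemma neg_mem {α : V} (hα : α ∈ Φ.roots) : -α ∈ Φ.roots := by
  have h := Φ.reflect_mem α hα α hα
  rwa [mul_div_assoc, div_self (inner_self_ne_zero.2 (Φ.nonzero α hα)), mul_one, two_smul,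
    sub_add_cancel_left] at h

lemma inner_lt_norm_mul_norm {α β : V} (hα : α ∈ Φ.roots) (hβ : β ∈ Φ.roots) (hne : α ≠ β) :
    ⟪α, β⟫ < ‖α‖ * ‖β‖ := by
  refine inner_lt_norm_mul_iff_real.2 fun h => hne ?_
  have hα0 : ‖α‖ ≠ 0 := norm_ne_zero_iff.2 (Φ.nonzero α hα)
  have hβα : (‖β‖ / ‖α‖) • α = β := by
    rw [div_eq_inv_mul, ← smul_smul, h, smul_smul, inv_mul_cancel₀ hα0, one_smul]
  rcases Φ.reduced α hα _ (hβα ▸ hβ) with h1 | h1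
  · rw [← hβα, h1, one_smul]
  · have : 0 < ‖β‖ / ‖α‖ :=
      div_pos (norm_pos_iff.2 (Φ.nonzero β hβ)) (norm_pos_iff.2 (Φ.nonzero α hα))
    linarith

lemma sub_mem_rootsZero_of_inner_pos {α β : V} (hα : α ∈ Φ.roots) (hβ : β ∈ Φ.roots)
    (h : 0 < ⟪α, β⟫) : α - β ∈ rootsZero Φ := by
  rcases eq_or_ne α β with rfl | hne
  · rw [sub_self]; exact Set.mem_insert _ _
  have hα0 : 0 < ‖α‖ := norm_pos_iff.2 (Φ.nonzero α hα)
  have hβ0 : 0 < ‖β‖ := norm_pos_iff.2 (Φ.nonzero β hβ)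
  obtain ⟨m, hm⟩ := Φ.integral α hα β hβ
  obtain ⟨n, hn⟩ := Φ.integral β hβ α hα
  rw [real_inner_comm, real_inner_self_eq_norm_mul_norm] at hm
  rw [real_inner_self_eq_norm_mul_norm] at hn
  -- The Cartan integers `m` and `n` are positive with `m * n < 4` by the strict Cauchy–Schwarz
  -- inequality, so one of them is `1`: then one of the reflections subtracts `α` from `β` or
  -- `β` from `α`.
  have hm0 : 0 < m := by exact_mod_cast (hm ▸ by positivity : (0 : ℝ) < m)
  have hn0 : 0 < n := by exact_mod_cast (hn ▸ by positivity : (0 : ℝ) < n)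
  have hmn : m * n < 4 := by
    have hCS := Φ.inner_lt_norm_mul_norm hα hβ hne
    suffices (m : ℝ) * n < 4 by exact_mod_cast this
    rw [← hm, ← hn, div_mul_div_comm, div_lt_iff₀ (by positivity)]
    nlinarith
  obtain rfl | rfl : m = 1 ∨ n = 1 := by
    by_contra! h
    nlinarith [show 2 ≤ m by omega, show 2 ≤ n by omega]
  · have := Φ.neg_mem (Φ.reflect_mem α hα β hβ)
    rw [real_inner_comm, real_inner_self_eq_norm_mul_norm, hm, Int.cast_one, one_smul, neg_sub]
      at this
    exact Set.mem_insert_of_mem _ this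
  · have := Φ.reflect_mem β hβ α hα
    rw [real_inner_self_eq_norm_mul_norm, hn, Int.cast_one, one_smul] at this
    exact Set.mem_insert_of_mem _ this

lemma neg_mem_rootsZero {x : V} (hx : x ∈ rootsZero Φ) : -x ∈ rootsZero Φ := by
  rcases hx with rfl | hx
  · rw [neg_zero]; exact Set.mem_insert _ _
  · exact Set.mem_insert_of_mem _ (Φ.neg_mem hx)

lemma sub_mem_rootsZero_or_sub_mem_rootsZero_of_add_eq {a b c d : V} (ha : a ∈ Φ.roots)
    (hb : b ∈ Φ.roots) (hc : c ∈ Φ.roots) (hd : d ∈ Φ.roots) (heq : a + b = c + d)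
    (hne : a + b ≠ 0) : a - c ∈ rootsZero Φ ∨ a - d ∈ rootsZero Φ := by
  have hpos : 0 < ⟪a, c⟫ + ⟪a, d⟫ + (⟪b, c⟫ + ⟪b, d⟫) := by
    rw [← inner_add_right, ← inner_add_right, ← inner_add_left, ← heq]
    exact real_inner_self_pos.2 hne
  have had' : a - d = -(b - c) := by rw [neg_sub, sub_eq_sub_iff_add_eq_add, heq]
  have hac' : a - c = -(b - d) := by rw [neg_sub, sub_eq_sub_iff_add_eq_add, heq, add_comm]
  by_contra! h
  have hac : ⟪a, c⟫ ≤ 0 := not_lt.1 fun hp => h.1 (Φ.sub_mem_rootsZero_of_inner_pos ha hc hp)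
  have had : ⟪a, d⟫ ≤ 0 := not_lt.1 fun hp => h.2 (Φ.sub_mem_rootsZero_of_inner_pos ha hd hp)
  have hbc : ⟪b, c⟫ ≤ 0 := not_lt.1 fun hp =>
    h.2 (had' ▸ Φ.neg_mem_rootsZero (Φ.sub_mem_rootsZero_of_inner_pos hb hc hp))
  have hbd : ⟪b, d⟫ ≤ 0 := not_lt.1 fun hp =>
    h.1 (hac' ▸ Φ.neg_mem_rootsZero (Φ.sub_mem_rootsZero_of_inner_pos hb hd hp))
  linarith

lemma exists_dual_ne_zero : ∃ f : Module.Dual ℝ V, ∀ x ∈ rootsZero Φ, f x = 0 → x = 0 := by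
  have := Φ.finite.to_subtype
  obtain ⟨f, hf⟩ := Module.exists_dual_forall_apply_ne_zero (K := ℝ)
    (fun α : Φ.roots => (α : V)) fun α => Φ.nonzero α α.2
  refine ⟨f, fun x hx h => ?_⟩
  rcases hx with rfl | hx
  · rfl
  · exact absurd h (hf ⟨x, hx⟩)

end ReducedRootSystem

theorem symmetric_two_cocycle_exact_general
    {V : Type} [NormedAddCommGroup V] [InnerProductSpace ℝ V]
    (Φ : ReducedRootSystem V) (M : Type) [AddCommGroup M]
    (ω : V → V → M)
    (hz : ∀ v : V, ω 0 v = 0) (hz' : ∀ v : V, ω v 0 = 0)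
    (hsym : ∀ α ∈ rootsZero Φ, ∀ β ∈ rootsZero Φ, α + β ∈ rootsZero Φ → ω β α = ω α β)
    (hcoc : ∀ α ∈ rootsZero Φ, ∀ β ∈ rootsZero Φ, ∀ γ ∈ rootsZero Φ,
      α + β ∈ rootsZero Φ → β + γ ∈ rootsZero Φ → α + β + γ ∈ rootsZero Φ →
      ω β γ - ω (α + β) γ + ω α (β + γ) - ω α β = 0) :
    ∃ ω1 : V → M, ω1 0 = 0 ∧
      ∀ α ∈ rootsZero Φ, ∀ β ∈ rootsZero Φ, α + β ∈ rootsZero Φ →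
        ω α β = ω1 α + ω1 β - ω1 (α + β) := by
  obtain ⟨f, hf⟩ := Φ.exists_dual_ne_zero
  have hroot : ∀ x ∈ positivePart (rootsZero Φ) f.toAddMonoidHom, x ∈ Φ.roots :=
    fun x hx => hx.1.resolve_left (ne_zero_of_mem_positivePart hx)
  have hexch : ∀ a ∈ positivePart (rootsZero Φ) f.toAddMonoidHom, ∀ b ∈ positivePart _ _,
      ∀ c ∈ positivePart _ _, ∀ d ∈ positivePart _ _, a + b = c + d →
        a - c ∈ rootsZero Φ ∨ a - d ∈ rootsZero Φ := fun a ha b hb c hc d hd heq =>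
    Φ.sub_mem_rootsZero_or_sub_mem_rootsZero_of_add_eq (hroot a ha) (hroot b hb) (hroot c hc)
      (hroot d hd) heq (add_ne_zero_of_mem_positivePart ha hb)
  exact exists_coboundary_of_isCocycleOn_of_isSymmOn (Φ.finite.insert 0) (Set.mem_insert _ _)
    (fun _ => Φ.neg_mem_rootsZero) hf (fun v _ => hz v) (fun v _ => hz' v) hcoc hsym hexch

/-- Every symmetric 2-cocycle on a reduced root system `Φ` with values in
a ℤ-module `M` is exact: there is a 1-cochain `ω1` (vanishing at `0`) with
`ω(α|β) = ω1(α) + ω1(β) - ω1(α+β)` on all pairs.  In other words `H²₊(Φ,M)` is trivial. -/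
theorem symmetric_two_cocycle_exact
    {V : Type} [NormedAddCommGroup V] [InnerProductSpace ℝ V] [FiniteDimensional ℝ V]
    (Φ : ReducedRootSystem V) (M : Type) [AddCommGroup M]
    (ω : V → V → M)
    (hz : ∀ v : V, ω 0 v = 0) (hz' : ∀ v : V, ω v 0 = 0)
    (hsym : ∀ α ∈ rootsZero Φ, ∀ β ∈ rootsZero Φ, α + β ∈ rootsZero Φ → ω β α = ω α β)
    (hcoc : ∀ α ∈ rootsZero Φ, ∀ β ∈ rootsZero Φ, ∀ γ ∈ rootsZero Φ,
      α + β ∈ rootsZero Φ → β + γ ∈ rootsZero Φ → α + β + γ ∈ rootsZero Φ →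
      ω β γ - ω (α + β) γ + ω α (β + γ) - ω α β = 0) :
    ∃ ω1 : V → M, ω1 0 = 0 ∧
      ∀ α ∈ rootsZero Φ, ∀ β ∈ rootsZero Φ, α + β ∈ rootsZero Φ →
        ω α β = ω1 α + ω1 β - ω1 (α + β) :=
  symmetric_two_cocycle_exact_general Φ M ω hz hz' hsym hcoc
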